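/- arXiv:1103.3398 — 4 statements merged into one kernel-verified Lean document; each statement's English description precedes it below -/
import Mathlib

section
/- Let Φ be a root system spanning a euclidean vector space E with Weyl group W, and let S be a W-orbit in E. Suppose that there are no four distinct elements λ₁,λ₂,λ₃,λ₄ ∈ S with λ₁+λ₂ = λ₃+λ₄. Then for any λ ∈ S and any two orthogonal roots α₁, α₂ ∈ Φ, λ is orthogonal to α₁ or λ is orthogonal to α₂. -/
open scoped InnerProductSpace

/-- The reflection `s_α` associated to a root `α`:
`s_α(x) = x − 2(x,α)/(α,α)·α`. -/
noncomputable def rootReflection {E : Type*} [NormedAddCommGroup E] [InnerProductSpace ℝ E]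
    (α : E) (x : E) : E :=
  x - (2 * ⟪x, α⟫_ℝ / ⟪α, α⟫_ℝ) • α

/-- If `S` is a Weyl-group orbit (in particular invariant under all reflections `s_α`, `α ∈ Φ`)
containing no four distinct elements with `λ₁+λ₂ = λ₃+λ₄`, then every `λ ∈ S` is orthogonal to
one of any two orthogonal roots. -/
theorem stmt0 {E : Type*} [NormedAddCommGroup E] [InnerProductSpace ℝ E]
    (Φ S : Set E) (hΦ : ∀ α ∈ Φ, α ≠ 0)
    (hSorbit : ∀ α ∈ Φ, ∀ lam ∈ S, rootReflection α lam ∈ S)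
    (hno4 : ¬ ∃ l₁ l₂ l₃ l₄ : E, l₁ ∈ S ∧ l₂ ∈ S ∧ l₃ ∈ S ∧ l₄ ∈ S ∧
      l₁ ≠ l₂ ∧ l₁ ≠ l₃ ∧ l₁ ≠ l₄ ∧ l₂ ≠ l₃ ∧ l₂ ≠ l₄ ∧ l₃ ≠ l₄ ∧ l₁ + l₂ = l₃ + l₄)
    (lam : E) (hlam : lam ∈ S)
    (α₁ α₂ : E) (hα₁ : α₁ ∈ Φ) (hα₂ : α₂ ∈ Φ) (horth : ⟪α₁, α₂⟫_ℝ = 0) :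
    ⟪lam, α₁⟫_ℝ = 0 ∨ ⟪lam, α₂⟫_ℝ = 0 := by
  by_contra h
  push_neg at h
  obtain ⟨h1, h2⟩ := h
  have hα₁0 : α₁ ≠ 0 := hΦ α₁ hα₁
  have hα₂0 : α₂ ≠ 0 := hΦ α₂ hα₂
  have hii1 : ⟪α₁, α₁⟫_ℝ ≠ 0 := inner_self_ne_zero.mpr hα₁0
  have hii2 : ⟪α₂, α₂⟫_ℝ ≠ 0 := inner_self_ne_zero.mpr hα₂0
  set c₁ : ℝ := 2 * ⟪lam, α₁⟫_ℝ / ⟪α₁, α₁⟫_ℝ with hc₁def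
  set c₂ : ℝ := 2 * ⟪lam, α₂⟫_ℝ / ⟪α₂, α₂⟫_ℝ with hc₂def
  have hc₁ : c₁ ≠ 0 := by
    rw [hc₁def]; exact div_ne_zero (by simpa using h1) hii1
  have hc₂ : c₂ ≠ 0 := by
    rw [hc₂def]; exact div_ne_zero (by simpa using h2) hii2
  have horth' : ⟪α₂, α₁⟫_ℝ = 0 := by rwa [real_inner_comm]
  -- key nondegeneracy lemma
  have key : ∀ a b : ℝ, a ≠ 0 → a • α₁ + b • α₂ ≠ 0 := by
    intro a b ha hab
    have : ⟪a • α₁ + b • α₂, α₁⟫_ℝ = 0 := by rw [hab, inner_zero_left]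
    rw [inner_add_left, real_inner_smul_left, real_inner_smul_left, horth', mul_zero,
      add_zero] at this
    exact (mul_ne_zero ha hii1) this
  have key' : ∀ a b : ℝ, b ≠ 0 → a • α₁ + b • α₂ ≠ 0 := by
    intro a b hb hab
    have : ⟪a • α₁ + b • α₂, α₂⟫_ℝ = 0 := by rw [hab, inner_zero_left]
    rw [inner_add_left, real_inner_smul_left, real_inner_smul_left, horth, mul_zero,
      zero_add] at this
    exact (mul_ne_zero hb hii2) this
  have hs₁ : rootReflection α₁ lam = lam - c₁ • α₁ := rfl
  have hs₂ : rootReflection α₂ lam = lam - c₂ • α₂ := rfl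
  have hs₁₂ : rootReflection α₁ (rootReflection α₂ lam) = lam - c₂ • α₂ - c₁ • α₁ := by
    rw [rootReflection, hs₂]
    congr 2
    rw [inner_sub_left, real_inner_smul_left, horth', mul_zero, sub_zero]
  have m1 : rootReflection α₁ lam ∈ S := hSorbit α₁ hα₁ lam hlam
  have m2 : rootReflection α₂ lam ∈ S := hSorbit α₂ hα₂ lam hlam
  have m12 : rootReflection α₁ (rootReflection α₂ lam) ∈ S :=
    hSorbit α₁ hα₁ _ m2
  rw [hs₁] at m1
  rw [hs₂] at m2
  rw [hs₁₂] at m12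
  apply hno4
  refine ⟨lam, lam - c₂ • α₂ - c₁ • α₁, lam - c₁ • α₁, lam - c₂ • α₂,
    hlam, m12, m1, m2, ?_, ?_, ?_, ?_, ?_, ?_, by abel⟩
  · intro he
    apply key c₁ c₂ hc₁
    have : c₁ • α₁ + c₂ • α₂ = lam - (lam - c₂ • α₂ - c₁ • α₁) := by abel
    rw [this, ← he, sub_self]
  · intro he
    apply key c₁ 0 hc₁
    have : c₁ • α₁ + (0:ℝ) • α₂ = lam - (lam - c₁ • α₁) := by
      rw [zero_smul]; abel
    rw [this, ← he, sub_self]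
  · intro he
    apply key' 0 c₂ hc₂
    have : (0:ℝ) • α₁ + c₂ • α₂ = lam - (lam - c₂ • α₂) := by
      rw [zero_smul]; abel
    rw [this, ← he, sub_self]
  · intro he
    apply key' 0 c₂ hc₂
    have : (0:ℝ) • α₁ + c₂ • α₂ = (lam - c₁ • α₁) - (lam - c₂ • α₂ - c₁ • α₁) := by
      rw [zero_smul]; abel
    rw [this, he, sub_self]
  · intro he
    apply key c₁ 0 hc₁
    have : c₁ • α₁ + (0:ℝ) • α₂ = (lam - c₂ • α₂) - (lam - c₂ • α₂ - c₁ • α₁) := by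
      rw [zero_smul]; abel
    rw [this, he, sub_self]
  · intro he
    apply key c₁ (-c₂) hc₁
    have : c₁ • α₁ + (-c₂) • α₂ = (lam - c₂ • α₂) - (lam - c₁ • α₁) := by
      rw [neg_smul]; abel
    rw [this, ← he, sub_self]
end

section
/- Let E be a euclidean space, and suppose Φ ⊂ E contains a root subsystem of type B₂, i.e. there exist orthogonal vectors e₁, e₂ ∈ E of equal norm such that ±e₁, ±e₂, ±e₁±e₂ all lie in Φ. Let S be an orbit of the Weyl group of Φ that spans E. Then there exist a vector λ ∈ S and two orthogonal roots α₁, α₂ ∈ Φ such that λ is orthogonal to neither α₁ nor α₂ — equivalently, if every element of S is, for each pair of orthogonal roots, orthogonal to at least one of them, then S does not span E. -/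
open scoped InnerProductSpace

/- Every `λ ∈ S` is orthogonal to `e₁`: the orthogonal pair `(e₁, e₂)` forces `λ ⊥ e₁` or `λ ⊥ e₂`,
and in the second case the orthogonal pair `(e₁ + e₂, e₁ - e₂)` (orthogonal because
`‖e₁‖ = ‖e₂‖`) forces `λ ⊥ e₁ ± e₂`, hence again `λ ⊥ e₁`. So `S` lies in the hyperplane `e₁ᗮ`. -/

section

variable {𝕜 E : Type*} [RCLike 𝕜] [NormedAddCommGroup E] [InnerProductSpace 𝕜 E]

theorem inner_eq_zero_of_inner_add_eq_zero_or_inner_sub_eq_zero {x e f : E}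
    (hf : ⟪x, f⟫_𝕜 = 0) (h : ⟪x, e + f⟫_𝕜 = 0 ∨ ⟪x, e - f⟫_𝕜 = 0) : ⟪x, e⟫_𝕜 = 0 := by
  rcases h with h | h
  · rwa [inner_add_right, hf, add_zero] at h
  · rwa [inner_sub_right, hf, sub_zero] at h

theorem Submodule.span_ne_top_of_forall_inner_eq_zero {S : Set E} {v : E} (hv : v ≠ 0)
    (hS : ∀ x ∈ S, ⟪x, v⟫_𝕜 = 0) : Submodule.span 𝕜 S ≠ ⊤ := by
  intro htop
  have hle : Submodule.span 𝕜 S ≤ (𝕜 ∙ v)ᗮ :=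
    Submodule.span_le.mpr fun x hx ↦ Submodule.mem_orthogonal_singleton_iff_inner_left.mpr (hS x hx)
  have hvv : ⟪v, v⟫_𝕜 = 0 :=
    Submodule.mem_orthogonal_singleton_iff_inner_left.mp (hle (htop ▸ Submodule.mem_top))
  exact hv (inner_self_eq_zero.mp hvv)

end

/-- If `Φ` contains a root subsystem of type `B₂` spanned by orthogonal vectors `e₁, e₂` of
equal norm, and every element of a Weyl orbit `S` is orthogonal to at least one root of each
orthogonal pair of roots in `Φ`, then `S` does not span `E`. -/
theorem stmt2 {E : Type*} [NormedAddCommGroup E] [InnerProductSpace ℝ E]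
    (Φ S : Set E) (e₁ e₂ : E) (he₁ : e₁ ≠ 0)
    (horth : ⟪e₁, e₂⟫_ℝ = 0) (hnorm : ‖e₁‖ = ‖e₂‖)
    (hB2 : ({e₁, -e₁, e₂, -e₂, e₁ + e₂, -(e₁ + e₂), e₁ - e₂, -(e₁ - e₂)} : Set E) ⊆ Φ)
    (hS : ∀ lam ∈ S, ∀ α₁ ∈ Φ, ∀ α₂ ∈ Φ, ⟪α₁, α₂⟫_ℝ = 0 →
      ⟪lam, α₁⟫_ℝ = 0 ∨ ⟪lam, α₂⟫_ℝ = 0) :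
    Submodule.span ℝ S ≠ ⊤ := by
  refine Submodule.span_ne_top_of_forall_inner_eq_zero he₁ fun lam hlam ↦ ?_
  rcases hS lam hlam e₁ (hB2 (by simp)) e₂ (hB2 (by simp)) horth with h₁ | h₂
  · exact h₁
  · exact inner_eq_zero_of_inner_add_eq_zero_or_inner_sub_eq_zero h₂ <|
      hS lam hlam (e₁ + e₂) (hB2 (by simp)) (e₁ - e₂) (hB2 (by simp))
        (real_inner_add_sub_eq_zero_iff e₁ e₂ |>.mpr hnorm)
end

section
/- Let k be a finite field with |k| > 9 and n ≥ 2. Let H be an additive subgroup of the matrix algebra gl_n(k) that is invariant under conjugation by SL_n(k). Then either H is contained in the scalar matrices, or H contains sl_n(k) (the trace-zero matrices). -/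
/-!
Conjugating by the diagonal matrices `diag(t ^ w p)` (with `∑ w = 0`) and summing over `t ∈ kˣ`
projects an element of `H` onto its weight-zero part, because `∑ t : kˣ, t ^ m` vanishes unless
`|k| - 1 ∣ m`. Starting from a non-scalar `x ∈ H`, such a projection isolates a `2 × 2` block of
`x`; conjugating the block by a transvection and projecting once more leaves a nonzero multiple of
an elementary matrix `E i j` in `H`. Conjugation by diagonal matrices scales `E i j` by squares,
and every element of a finite field is a difference of two squares, so `H` contains the whole
line `k • E i j`. Transvections carry this line to every off-diagonal position and to the
differences `E p p - E q q`, which generate the trace-zero matrices.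
-/

open Matrix

theorem Fintype.exists_ne_and_ne_of_two_lt_card {α : Type*} [Fintype α]
    (h : 2 < Fintype.card α) (a b : α) : ∃ c, c ≠ a ∧ c ≠ b := by
  classical
  obtain ⟨c, -, hc⟩ := Finset.exists_mem_notMem_of_card_lt_card
    (s := {a, b}) (t := Finset.univ) (Finset.card_le_two.trans_lt h)
  exact ⟨c, by simpa [not_or] using hc⟩

namespace FiniteField

variable {k : Type*} [Field k] [Fintype k]

theorem sum_units_zpow [DecidableEq k] (a : ℤ) :
    ∑ t : kˣ, ((t ^ a : kˣ) : k) = if ((Fintype.card k - 1 : ℕ) : ℤ) ∣ a then -1 else 0 := by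
  have hm : 0 < Fintype.card kˣ := Fintype.card_pos
  have hred (t : kˣ) : t ^ a = t ^ (a % Fintype.card kˣ).toNat := by
    rw [← zpow_natCast, Int.toNat_of_nonneg (Int.emod_nonneg _ (by omega)), zpow_mod_card]
  simp_rw [hred, Units.val_pow_eq_pow_val, sum_pow_units, ← Fintype.card_units]
  congr 1
  rw [Int.dvd_iff_emod_eq_zero]
  have h₀ : 0 ≤ a % Fintype.card kˣ := Int.emod_nonneg a (by omega)
  have h₁ : a % Fintype.card kˣ < Fintype.card kˣ := Int.emod_lt_of_pos a (by omega)
  generalize a % _ = r at h₀ h₁ ⊢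
  refine propext ⟨fun h => ?_, fun h => by simp [h]⟩
  have := Nat.eq_zero_of_dvd_of_lt h (by omega)
  omega

theorem exists_sq_sub_sq (s : k) : ∃ a b : k, a ^ 2 - b ^ 2 = s := by
  by_cases h2 : ringChar k = 2
  · obtain ⟨r, hr⟩ := isSquare_of_char_two h2 s
    exact ⟨r, 0, by rw [hr]; ring⟩
  · have := Ring.two_ne_zero h2
    exact ⟨(s + 1) / 2, (s - 1) / 2, by field_simp; ring⟩

theorem exists_mul_sub_sq_mul_ne_zero (hk : 2 < Fintype.card k) {γ δ : k} (h : γ ≠ 0 ∨ δ ≠ 0) :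
    ∃ c : k, c * δ - c ^ 2 * γ ≠ 0 := by
  rcases eq_or_ne γ 0 with rfl | hγ
  · exact ⟨1, by simpa using h⟩
  obtain ⟨c, hc₀, hc⟩ := Fintype.exists_ne_and_ne_of_two_lt_card hk 0 (δ / γ)
  refine ⟨c, ?_⟩
  have : c * δ - c ^ 2 * γ = c * γ * (δ / γ - c) := by field_simp
  rw [this]
  exact mul_ne_zero (mul_ne_zero hc₀ hγ) (sub_ne_zero.mpr hc.symm)

end FiniteField

namespace Matrix

variable {ι : Type*} [DecidableEq ι]

theorem exists_ne_of_forall_ne_smul_one {R : Type*} [Semiring R] {x : Matrix ι ι R}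
    (hx : ∀ c : R, x ≠ c • 1) : ∃ i j, i ≠ j ∧ (x j i ≠ 0 ∨ x i i ≠ x j j) := by
  by_contra! h
  obtain _ | ⟨⟨i₀⟩⟩ := isEmpty_or_nonempty ι
  · exact hx 0 (Subsingleton.elim _ _)
  refine hx (x i₀ i₀) (ext fun p q => ?_)
  rcases eq_or_ne p q with rfl | hpq
  · rcases eq_or_ne p i₀ with rfl | hp
    · simp
    · simp [(h p i₀ hp).2]
  · simp [hpq, (h q p hpq.symm).1]

def coroot (i j : ι) : ι → ℤ := Pi.single i 1 - Pi.single j 1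

theorem abs_coroot_sub_coroot_le (i j p q : ι) : |coroot i j p - coroot i j q| ≤ 2 := by
  rw [abs_le]
  simp only [coroot, Pi.sub_apply, Pi.single_apply]
  split_ifs <;> omega

def weightZeroPart {R : Type*} [Zero R] (w : ι → ℤ) (x : Matrix ι ι R) : Matrix ι ι R :=
  of fun p q => if w p = w q then x p q else 0

theorem sub_weightZeroPart_eq {R : Type*} [AddCommGroup R] {i j : ι} {w : ι → ℤ} (hw : w i ≠ w j)
    (a b : R) :
    (single i i a - single j j a + single i j b) -
      weightZeroPart w (single i i a - single j j a + single i j b) = single i j b := by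
  ext p q
  simp only [weightZeroPart, sub_apply, add_apply, of_apply, single_apply]
  split_ifs <;> grind

variable [Fintype ι] {k : Type*} [Field k]

theorem sum_coroot (i j : ι) : ∑ p, coroot i j p = 0 := by
  simp [coroot, Finset.sum_sub_distrib]

def cocharacter (w : ι → ℤ) (t : kˣ) : Matrix ι ι k :=
  diagonal fun p => ((t ^ w p : kˣ) : k)

theorem det_cocharacter {w : ι → ℤ} (hw : ∑ p, w p = 0) (t : kˣ) :
    (cocharacter w t).det = 1 := by
  have : ∏ p, t ^ w p = t ^ ∑ p, w p :=
    (map_prod (zpowersHom kˣ t) (fun p => Multiplicative.ofAdd (w p)) Finset.univ).symm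
  rw [cocharacter, det_diagonal, ← Units.coe_prod, this, hw, zpow_zero, Units.val_one]

theorem cocharacter_mul_cocharacter_neg (w : ι → ℤ) (t : kˣ) :
    cocharacter w t * cocharacter (-w) t = 1 := by
  rw [cocharacter, cocharacter, diagonal_mul_diagonal, ← diagonal_one]
  simp_rw [Pi.neg_apply, ← Units.val_mul, ← _root_.zpow_add, add_neg_cancel, zpow_zero,
    Units.val_one]

theorem cocharacter_mul_mul_cocharacter_neg_apply (w : ι → ℤ) (t : kˣ) (x : Matrix ι ι k)
    (p q : ι) :
    (cocharacter w t * x * cocharacter (-w) t) p q = ((t ^ (w p - w q) : kˣ) : k) * x p q := by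
  rw [cocharacter, cocharacter, mul_diagonal, diagonal_mul, sub_eq_add_neg, _root_.zpow_add,
    Units.val_mul]
  simp only [Pi.neg_apply]
  ring

theorem sum_cocharacter_mul_mul_cocharacter_neg [Fintype k] [DecidableEq k] {w : ι → ℤ}
    (hw : ∀ p q, |w p - w q| < Fintype.card k - 1) (x : Matrix ι ι k) :
    ∑ t : kˣ, cocharacter w t * x * cocharacter (-w) t = -weightZeroPart w x := by
  ext p q
  have hdvd : ((Fintype.card k - 1 : ℕ) : ℤ) ∣ w p - w q ↔ w p = w q := by
    rw [Nat.cast_sub Fintype.card_pos, Nat.cast_one, ← sub_eq_zero]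
    exact ⟨fun h => Int.eq_zero_of_abs_lt_dvd h (hw p q), fun h => by simp [h]⟩
  simp only [sum_apply, cocharacter_mul_mul_cocharacter_neg_apply, ← Finset.sum_mul,
    FiniteField.sum_units_zpow, hdvd, weightZeroPart, neg_apply, of_apply]
  split_ifs <;> simp

theorem single_mul_sub_eq_of_block {i j : ι} (hij : i ≠ j) (c : k) {x : Matrix ι ι k}
    (hrow : ∀ q, q ≠ i → q ≠ j → x j q = 0) (hcol : ∀ p, p ≠ i → p ≠ j → x p i = 0) :
    single i j c * x - x * single i j c - single i j c * x * single i j c =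
      single i i (c * x j i) - single j j (c * x j i) +
        single i j (c * (x j j - x i i) - c ^ 2 * x j i) := by
  rw [single_mul_mul_single]
  ext p q
  have hl : (single i j c * x) p q = if p = i then c * x j q else 0 := by
    split_ifs with h
    · rw [h, single_mul_apply_same]
    · exact single_mul_apply_of_ne _ _ _ _ _ h _
  have hr : (x * single i j c) p q = if q = j then x p i * c else 0 := by
    split_ifs with h
    · rw [h, mul_single_apply_same]
    · exact mul_single_apply_of_ne _ _ _ _ _ h _
  simp only [sub_apply, add_apply, hl, hr, single_apply]
  split_ifs <;> grind

theorem _root_.AddSubgroup.mem_of_trace_eq_zero {R : Type*} [Ring R]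
    {H : AddSubgroup (Matrix ι ι R)} (hoff : ∀ p q : ι, p ≠ q → ∀ c : R, single p q c ∈ H)
    (hdiag : ∀ p q : ι, ∀ c : R, single p p c - single q q c ∈ H)
    {x : Matrix ι ι R} (hx : x.trace = 0) : x ∈ H := by
  obtain _ | ⟨⟨i₀⟩⟩ := isEmpty_or_nonempty ι
  · simp [Subsingleton.elim x 0]
  have hdiag₀ : ∑ p, single i₀ i₀ (x p p) = 0 := by
    have := map_sum (singleAddMonoidHom i₀ i₀ : R →+ Matrix ι ι R) (fun p => x p p) Finset.univ
    simp only [singleAddMonoidHom_apply] at this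
    rw [← this, show ∑ p, x p p = 0 from hx, single_zero]
  have hsum : x = ∑ p, ∑ q, (single p q (x p q) - if p = q then single i₀ i₀ (x p p) else 0) := by
    simp only [Finset.sum_sub_distrib, Finset.sum_ite_eq, Finset.mem_univ, if_true]
    rw [hdiag₀, sub_zero, ← matrix_eq_sum_single]
  rw [hsum]
  refine sum_mem fun p _ => sum_mem fun q _ => ?_
  split_ifs with hpq
  · subst hpq
    exact hdiag p i₀ _
  · simpa using hoff p q hpq (x p q)

end Matrix

section

variable {ι k : Type*} [Fintype ι] [DecidableEq ι] [Field k]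

def IsSLConjInvariant (H : AddSubgroup (Matrix ι ι k)) : Prop :=
  ∀ g : SpecialLinearGroup ι k, ∀ x ∈ H,
    (g : Matrix ι ι k) * x * ((g⁻¹ : SpecialLinearGroup ι k) : Matrix ι ι k) ∈ H

namespace IsSLConjInvariant

variable {H : AddSubgroup (Matrix ι ι k)} (hH : IsSLConjInvariant H)
include hH

theorem mul_mul_mem {a b x : Matrix ι ι k} (ha : a.det = 1) (hab : a * b = 1) (hx : x ∈ H) :
    a * x * b ∈ H := by
  have hb : adjugate a = b := left_inv_eq_right_inv (by rw [adjugate_mul, ha, one_smul]) hab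
  have := hH ⟨a, ha⟩ x hx
  change a * x * adjugate a ∈ H at this
  rwa [hb] at this

theorem single_mul_sub_mem {i j : ι} (hij : i ≠ j) (c : k) {x : Matrix ι ι k} (hx : x ∈ H) :
    single i j c * x - x * single i j c - single i j c * x * single i j c ∈ H := by
  have hsq : single i j c * single i j c = 0 := single_mul_single_of_ne c i j i hij.symm c
  have hinv : (1 + single i j c) * (1 - single i j c) = 1 := by noncomm_ring [hsq]
  have hdet : (1 + single i j c).det = 1 := det_transvection_of_ne i j hij c
  convert sub_mem (hH.mul_mul_mem hdet hinv hx) hx using 1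
  noncomm_ring [hsq]

theorem weightZeroPart_mem [Fintype k] {w : ι → ℤ} (hw₀ : ∑ p, w p = 0)
    (hw : ∀ p q, |w p - w q| < Fintype.card k - 1) {x : Matrix ι ι k} (hx : x ∈ H) :
    weightZeroPart w x ∈ H := by
  classical
  rw [← neg_neg (weightZeroPart w x), ← sum_cocharacter_mul_mul_cocharacter_neg hw]
  exact neg_mem <| sum_mem fun t _ =>
    hH.mul_mul_mem (det_cocharacter hw₀ t) (cocharacter_mul_cocharacter_neg w t) hx

theorem single_sq_mul_mem {i j : ι} (hij : i ≠ j) (a : k) {c : k} (h : single i j c ∈ H) :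
    single i j (a ^ 2 * c) ∈ H := by
  rcases eq_or_ne a 0 with rfl | ha
  · simp
  convert hH.mul_mul_mem (det_cocharacter (sum_coroot i j) (Units.mk0 a ha))
    (cocharacter_mul_cocharacter_neg _ _) h using 1
  ext p q
  rw [cocharacter_mul_mul_cocharacter_neg_apply, single_apply, single_apply]
  split_ifs with hpq
  · obtain ⟨rfl, rfl⟩ := hpq
    simp [coroot, hij, hij.symm]
  · simp

theorem single_mem_of_ne_zero [Fintype k] {i j : ι} (hij : i ≠ j) {b : k} (hb : b ≠ 0)
    (h : single i j b ∈ H) (c : k) : single i j c ∈ H := by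
  obtain ⟨α, β, hαβ⟩ := FiniteField.exists_sq_sub_sq (c / b)
  have := sub_mem (hH.single_sq_mul_mem hij α h) (hH.single_sq_mul_mem hij β h)
  have hsub := map_sub (singleAddMonoidHom i j : k →+ Matrix ι ι k) (α ^ 2 * b) (β ^ 2 * b)
  simp only [singleAddMonoidHom_apply] at hsub
  rwa [← hsub, ← sub_mul, hαβ, div_mul_cancel₀ _ hb] at this

theorem exists_mem_block_eq [Fintype k] (hk : 4 < Fintype.card k) {i j : ι} (hij : i ≠ j)
    {x : Matrix ι ι k} (hx : x ∈ H) :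
    ∃ y ∈ H, (∀ q, q ≠ i → q ≠ j → y j q = 0) ∧ (∀ p, p ≠ i → p ≠ j → y p i = 0) ∧
      y i i = x i i ∧ y j j = x j j ∧ y j i = x j i := by
  by_cases hm : ∃ m, m ≠ i ∧ m ≠ j
  · obtain ⟨m, hmi, hmj⟩ := hm
    let w : ι → ℤ := Pi.single i 1 + Pi.single j 1 - Pi.single m 2
    have hw₀ : ∑ p, w p = 0 := by simp [w, Finset.sum_add_distrib, Finset.sum_sub_distrib]
    have hw (p q : ι) : |w p - w q| < Fintype.card k - 1 := by
      rw [abs_lt]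
      simp only [w, Pi.add_apply, Pi.sub_apply, Pi.single_apply]
      split_ifs <;> subst_vars <;> first | contradiction | (constructor <;> omega)
    have hwi : w i = 1 := by simp [w, hij, hmi.symm]
    have hwj : w j = 1 := by simp [w, hij.symm, hmj.symm]
    have hw_ne (p : ι) (hpi : p ≠ i) (hpj : p ≠ j) : w p ≠ 1 := by
      simp only [w, Pi.add_apply, Pi.sub_apply, Pi.single_apply, hpi, hpj]
      split_ifs <;> decide
    refine ⟨weightZeroPart w x, hH.weightZeroPart_mem hw₀ hw hx, fun q hqi hqj => ?_,
      fun p hpi hpj => ?_, by simp [weightZeroPart], by simp [weightZeroPart],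
      by simp [weightZeroPart, hwi, hwj]⟩
    · simp [weightZeroPart, hwj, (hw_ne q hqi hqj).symm]
    · simp [weightZeroPart, hwi, hw_ne p hpi hpj]
  · push Not at hm
    exact ⟨x, hx, fun q hqi hqj => absurd (hm q hqi) hqj, fun p hpi hpj => absurd (hm p hpi) hpj,
      rfl, rfl, rfl⟩

theorem exists_single_mem [Fintype k] (hk : 4 < Fintype.card k) {i j : ι} (hij : i ≠ j)
    {x : Matrix ι ι k} (hx : x ∈ H) (hne : x j i ≠ 0 ∨ x i i ≠ x j j) :
    ∃ b ≠ 0, single i j b ∈ H := by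
  obtain ⟨y, hy, hrow, hcol, hii, hjj, hji⟩ := hH.exists_mem_block_eq hk hij hx
  obtain ⟨c, hc⟩ := FiniteField.exists_mul_sub_sq_mul_ne_zero (by omega)
    (γ := y j i) (δ := y j j - y i i) (by rwa [hii, hjj, hji, sub_ne_zero, ne_comm (a := x j j)])
  have hz := hH.single_mul_sub_mem hij c hy
  rw [single_mul_sub_eq_of_block hij c hrow hcol] at hz
  have hw (p q : ι) : |coroot i j p - coroot i j q| < Fintype.card k - 1 :=
    (abs_coroot_sub_coroot_le i j p q).trans_lt (by omega)
  have := sub_mem hz (hH.weightZeroPart_mem (sum_coroot i j) hw hz)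
  rw [sub_weightZeroPart_eq (by simp [coroot, hij, hij.symm])] at this
  exact ⟨_, hc, this⟩

theorem forall_single_mem_of_right {i j r : ι} (hjr : j ≠ r) (hri : r ≠ i)
    (h : ∀ c : k, single i j c ∈ H) (c : k) : single i r c ∈ H := by
  simpa [single_mul_single_of_ne _ _ _ _ hri] using hH.single_mul_sub_mem hjr 1 (h c)

theorem forall_single_mem_of_left {i j r : ι} (hri : r ≠ i) (hrj : r ≠ j)
    (h : ∀ c : k, single i j c ∈ H) (c : k) : single r j c ∈ H := by
  simpa [single_mul_single_of_ne _ _ _ _ hrj.symm] using hH.single_mul_sub_mem hri 1 (h c)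

theorem forall_single_mem_swap [Fintype k] (hk : 2 < Fintype.card k) {i j : ι} (hij : i ≠ j)
    (h : ∀ c : k, single i j c ∈ H) (c : k) : single j i c ∈ H := by
  obtain ⟨d, hd₀, hd₁⟩ := Fintype.exists_ne_and_ne_of_two_lt_card hk 0 1
  have hd : d ^ 2 - d ≠ 0 := by
    rw [sq, ← mul_sub_one]
    exact mul_ne_zero hd₀ (sub_ne_zero.mpr hd₁)
  set c₀ := c / (d ^ 2 - d)
  -- `(1 + E j i d)` conjugates `E i j c` to `E i j c + d c (E j j - E i i) - d ^ 2 c E j i`,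
  -- so the diagonal parts cancel in the difference below.
  convert sub_mem (hH.single_mul_sub_mem hij.symm 1 (h (d * c₀)))
    (hH.single_mul_sub_mem hij.symm d (h c₀)) using 1
  simp only [single_mul_single_same]
  ext p q
  simp only [Matrix.sub_apply, single_apply]
  split_ifs <;> grind

theorem forall_single_mem [Fintype k] (hk : 2 < Fintype.card k) {i j : ι} (hij : i ≠ j)
    (h : ∀ c : k, single i j c ∈ H) (p q : ι) (hpq : p ≠ q) (c : k) : single p q c ∈ H := by
  have hrow {r : ι} (hri : r ≠ i) : ∀ c : k, single i r c ∈ H := by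
    rcases eq_or_ne r j with rfl | hrj
    · exact h
    · exact hH.forall_single_mem_of_right hrj.symm hri h
  rcases eq_or_ne p i with rfl | hpi
  · exact hrow hpq.symm c
  rcases eq_or_ne q i with rfl | hqi
  · rcases eq_or_ne p j with rfl | hpj
    · exact hH.forall_single_mem_swap hk hij h c
    · exact hH.forall_single_mem_of_left hpj hpq (hH.forall_single_mem_swap hk hij h) c
  · exact hH.forall_single_mem_of_left hpi hpq (hrow hqi) c

theorem single_sub_single_mem (h : ∀ p q : ι, p ≠ q → ∀ c : k, single p q c ∈ H)
    (p q : ι) (c : k) : single p p c - single q q c ∈ H := by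
  rcases eq_or_ne p q with rfl | hpq
  · simp
  simpa using add_mem (hH.single_mul_sub_mem hpq 1 (h q p hpq.symm c)) (h p q hpq c)

end IsSLConjInvariant

end

theorem stmt6_general {n : ℕ} (k : Type*) [Field k] [Fintype k]
    (hk : 9 < Fintype.card k)
    (H : AddSubgroup (Matrix (Fin n) (Fin n) k))
    (hinv : ∀ g : Matrix.SpecialLinearGroup (Fin n) k, ∀ x ∈ H,
      (g : Matrix (Fin n) (Fin n) k) * x * ((g⁻¹ : Matrix.SpecialLinearGroup (Fin n) k) :
        Matrix (Fin n) (Fin n) k) ∈ H) :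
    (∀ x ∈ H, ∃ c : k, x = c • (1 : Matrix (Fin n) (Fin n) k)) ∨
    (∀ x : Matrix (Fin n) (Fin n) k, Matrix.trace x = 0 → x ∈ H) := by
  have hH : IsSLConjInvariant H := hinv
  refine or_iff_not_imp_left.mpr fun hscalar => ?_
  push Not at hscalar
  obtain ⟨x, hx, hx_ne⟩ := hscalar
  obtain ⟨i, j, hij, hne⟩ := exists_ne_of_forall_ne_smul_one hx_ne
  obtain ⟨b, hb, hbH⟩ := hH.exists_single_mem (by omega) hij hx hne
  have hoff := hH.forall_single_mem (by omega) hij (hH.single_mem_of_ne_zero hij hb hbH)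
  exact fun y => AddSubgroup.mem_of_trace_eq_zero hoff (hH.single_sub_single_mem hoff)

/-- Let `k` be a finite field with `|k| > 9` and `n ≥ 2`.  Any additive subgroup of
`gl_n(k)` invariant under conjugation by `SL_n(k)` is contained in the scalar matrices or
contains all trace-zero matrices. -/
theorem stmt6 {n : ℕ} (hn : 2 ≤ n) (k : Type*) [Field k] [Fintype k]
    (hk : 9 < Fintype.card k)
    (H : AddSubgroup (Matrix (Fin n) (Fin n) k))
    (hinv : ∀ g : Matrix.SpecialLinearGroup (Fin n) k, ∀ x ∈ H,
      (g : Matrix (Fin n) (Fin n) k) * x * ((g⁻¹ : Matrix.SpecialLinearGroup (Fin n) k) :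
        Matrix (Fin n) (Fin n) k) ∈ H) :
    (∀ x ∈ H, ∃ c : k, x = c • (1 : Matrix (Fin n) (Fin n) k)) ∨
    (∀ x : Matrix (Fin n) (Fin n) k, Matrix.trace x = 0 → x ∈ H) :=
  stmt6_general k hk H hinv
end

section
/- Let R be a complete discrete valuation ring with maximal ideal 𝔭 and finite residue field k of characteristic 2. Let G² ⊂ GL₂(R) be the subgroup of matrices congruent to the identity modulo 𝔭², and let H be a subgroup of GL₂(R) contained in GL₂(k)·G^{2−}, where G^{2−} is the set of matrices congruent to the identity mod 𝔭 and to a scalar mod 𝔭². Then the map f : H → 𝔭²/𝔭³ sending h = γ·g₂·(1+ϖx) (with γ ∈ GL₂(k) ⊂ GL₂(R) via the Teichmüller lift, g₂ ∈ G², x ∈ R, ϖ a uniformizer) to Tr(g₂ − Id₂) mod 𝔭³ is a well-defined group homomorphism. -/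
/-!
Reducing `h = γ·g₂·(1+ϖx)` modulo `𝔭` recovers `γ`, so two decompositions of `h` differ only
in the scalar: `g₂' = c·g₂`. Comparing diagonal entries gives `c ≡ 1 mod 𝔭²`, and then
`Tr(c·g₂ − 1) = c·Tr(g₂ − 1) + 2(c − 1) ≡ Tr(g₂ − 1) mod 𝔭³` because `2 ∈ 𝔭`.
For products, `h·h' = (γγ')·(Γ'⁻¹g₂Γ'·g₂')·(scalar)` with `Γ'` the lift of `γ'`, and
`Tr(AB − 1) = Tr(A − 1) + Tr(B − 1) + Tr((A − 1)(B − 1))`, where the last term lies in `𝔭⁴`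
and `Tr(Γ'⁻¹g₂Γ' − 1) = Tr(g₂ − 1)`.
-/

open Matrix IsLocalRing

/-- `h` decomposes as `γ·g₂·(1+ϖx)` with `γ ∈ GL₂(k)` (embedded via the splitting `s`),
`g₂ ≡ Id mod 𝔭²`, and `x ∈ R`. -/
def IsDecomp (R : Type*) [CommRing R] [IsDomain R] [IsDiscreteValuationRing R]
    (k : Type*) [Field k] (s : k →+* R) (ϖ : R) (h : GL (Fin 2) R)
    (γ : GL (Fin 2) k) (g₂ : GL (Fin 2) R) (x : R) : Prop :=
  (∀ i j, ((g₂ : Matrix (Fin 2) (Fin 2) R) - 1) i j ∈ IsLocalRing.maximalIdeal R ^ 2) ∧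
  (h : Matrix (Fin 2) (Fin 2) R) =
    ((γ : Matrix (Fin 2) (Fin 2) k).map s) * (g₂ : Matrix (Fin 2) (Fin 2) R) *
      ((1 + ϖ * x) • (1 : Matrix (Fin 2) (Fin 2) R))

namespace Matrix

variable {n R : Type*} [Fintype n] [CommRing R]

lemma trace_mem_of_forall_mem {I : Ideal R} {A : Matrix n n R} (hA : ∀ i j, A i j ∈ I) :
    A.trace ∈ I :=
  Ideal.sum_mem _ fun i _ => hA i i

lemma mul_apply_mem_mul {I J : Ideal R} {A B : Matrix n n R} (hA : ∀ i j, A i j ∈ I)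
    (hB : ∀ i j, B i j ∈ J) (i j : n) : (A * B) i j ∈ I * J :=
  Ideal.sum_mem _ fun l _ => Ideal.mul_mem_mul (hA i l) (hB l j)

variable [DecidableEq n]

lemma trace_mul_sub_one (A B : Matrix n n R) :
    trace (A * B - 1) = trace ((A - 1) * (B - 1)) + trace (A - 1) + trace (B - 1) := by
  rw [← trace_add, ← trace_add]
  congr 1
  noncomm_ring

lemma trace_smul_sub_one (c : R) (A : Matrix n n R) :
    trace (c • A - 1) = c * trace (A - 1) + (c - 1) * Fintype.card n := by
  simp only [trace_sub, trace_smul, trace_one, smul_eq_mul]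
  ring

end Matrix

namespace Matrix.GeneralLinearGroup

variable {n R : Type*} [Fintype n] [DecidableEq n] [CommRing R]

variable (n) in
def congruenceSubgroup (I : Ideal R) : Subgroup (GL n R) :=
  (map (Ideal.Quotient.mk I)).ker

instance (I : Ideal R) : (congruenceSubgroup n I).Normal :=
  MonoidHom.normal_ker _

lemma mem_congruenceSubgroup_iff {I : Ideal R} {g : GL n R} :
    g ∈ congruenceSubgroup n I ↔ ∀ i j, ((g : Matrix n n R) - 1) i j ∈ I := by
  simp only [congruenceSubgroup, MonoidHom.mem_ker, ext_iff, GeneralLinearGroup.map_apply,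
    sub_apply, ← Ideal.Quotient.eq]
  refine forall₂_congr fun i j => ?_
  rw [Units.val_one, one_apply, one_apply]
  split_ifs <;> simp

lemma trace_sub_one_mem {I : Ideal R} {g : GL n R} (hg : g ∈ congruenceSubgroup n I) :
    trace ((g : Matrix n n R) - 1) ∈ I :=
  trace_mem_of_forall_mem (mem_congruenceSubgroup_iff.mp hg)

lemma map_eq_one_of_mem_congruenceSubgroup {S : Type*} [CommRing S] {I : Ideal R} {π : R →+* S}
    (hI : I ≤ RingHom.ker π) {g : GL n R} (hg : g ∈ congruenceSubgroup n I) :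
    (g : Matrix n n R).map π = 1 := by
  ext i j
  have hij := hI (mem_congruenceSubgroup_iff.mp hg i j)
  rw [RingHom.mem_ker, sub_apply, map_sub, sub_eq_zero] at hij
  rw [map_apply, hij, one_apply, one_apply, apply_ite π, map_one, map_zero]

lemma trace_conj_mul_sub_one_sub_mem {I J : Ideal R} {g g' : GL n R}
    (hg : g ∈ congruenceSubgroup n I) (hg' : g' ∈ congruenceSubgroup n J) (P : GL n R) :
    trace (((P⁻¹ * g * P * g' : GL n R) : Matrix n n R) - 1)
      - (trace ((g : Matrix n n R) - 1) + trace ((g' : Matrix n n R) - 1)) ∈ I * J := by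
  have hconj : P⁻¹ * g * P ∈ congruenceSubgroup n I := by
    simpa only [inv_inv] using Subgroup.Normal.conj_mem inferInstance g hg P⁻¹
  have htr : trace (((P⁻¹ * g * P : GL n R) : Matrix n n R) - 1)
      = trace ((g : Matrix n n R) - 1) := by
    rw [← trace_units_conj' P ((g : Matrix n n R) - 1)]
    simp only [Units.val_mul, mul_sub, sub_mul, mul_one, Units.inv_mul]
  rw [Units.val_mul _ g', trace_mul_sub_one, htr, add_sub_add_right_eq_sub, add_sub_cancel_right]
  exact trace_mem_of_forall_mem (mul_apply_mem_mul (mem_congruenceSubgroup_iff.mp hconj)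
    (mem_congruenceSubgroup_iff.mp hg'))

lemma sub_one_mem_of_smul_eq [Nonempty n] {I : Ideal R} {g g' : GL n R} {c : R}
    (hg : g ∈ congruenceSubgroup n I) (hg' : g' ∈ congruenceSubgroup n I)
    (h : (g' : Matrix n n R) = c • g) : c - 1 ∈ I := by
  obtain ⟨i⟩ := ‹Nonempty n›
  have hii : c - 1 = ((g' : Matrix n n R) - 1) i i - c * ((g : Matrix n n R) - 1) i i := by
    simp only [h, sub_apply, smul_apply, smul_eq_mul, one_apply_eq]
    ring
  rw [hii]
  exact sub_mem (mem_congruenceSubgroup_iff.mp hg' i i)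
    (I.mul_mem_left c (mem_congruenceSubgroup_iff.mp hg i i))

lemma trace_sub_one_sub_mem_of_smul_eq [Nonempty n] {𝔭 : Ideal R}
    (hn : (Fintype.card n : R) ∈ 𝔭) {g g' : GL n R} {c : R}
    (hg : g ∈ congruenceSubgroup n (𝔭 ^ 2)) (hg' : g' ∈ congruenceSubgroup n (𝔭 ^ 2))
    (h : (g' : Matrix n n R) = c • g) :
    trace ((g' : Matrix n n R) - 1) - trace ((g : Matrix n n R) - 1) ∈ 𝔭 ^ 3 := by
  have hc := sub_one_mem_of_smul_eq hg hg' h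
  have htr : trace ((g' : Matrix n n R) - 1) - trace ((g : Matrix n n R) - 1)
      = (c - 1) * trace ((g : Matrix n n R) - 1) + (c - 1) * Fintype.card n := by
    rw [h, trace_smul_sub_one]
    ring
  rw [htr]
  refine add_mem (Ideal.pow_le_pow_right (by norm_num : 3 ≤ 2 + 2) ?_) ?_
  · rw [pow_add]
    exact Ideal.mul_mem_mul hc (trace_sub_one_mem hg)
  · rw [pow_succ]
    exact Ideal.mul_mem_mul hc hn

end Matrix.GeneralLinearGroup

lemma IsLocalRing.isUnit_one_add_of_mem_maximalIdeal {R : Type*} [CommRing R] [IsLocalRing R]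
    {a : R} (ha : a ∈ maximalIdeal R) : IsUnit (1 + a) := by
  simpa using isUnit_one_sub_self_of_mem_nonunits (-a) (neg_mem ha)

namespace IsDecomp

open Matrix.GeneralLinearGroup

variable {R : Type*} [CommRing R] [IsDomain R] [IsDiscreteValuationRing R]
  {k : Type*} [Field k] {s : k →+* R} {ϖ : R} {h h' : GL (Fin 2) R} {γ γ' : GL (Fin 2) k}
  {g₂ g₂' : GL (Fin 2) R} {x x' : R}

lemma mem_congruenceSubgroup (hd : IsDecomp R k s ϖ h γ g₂ x) :
    g₂ ∈ congruenceSubgroup (Fin 2) (maximalIdeal R ^ 2) :=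
  mem_congruenceSubgroup_iff.mpr hd.1

lemma map_eq {π : R →+* k} (hπ : maximalIdeal R ≤ RingHom.ker π) (hs : ∀ c, π (s c) = c)
    (hϖ : ϖ ∈ maximalIdeal R) (hd : IsDecomp R k s ϖ h γ g₂ x) :
    (h : Matrix (Fin 2) (Fin 2) R).map π = γ := by
  have hg₂ : (g₂ : Matrix (Fin 2) (Fin 2) R).map π = 1 :=
    map_eq_one_of_mem_congruenceSubgroup ((Ideal.pow_le_self two_ne_zero).trans hπ)
      hd.mem_congruenceSubgroup
  have hγ : ((γ : Matrix (Fin 2) (Fin 2) k).map s).map π = γ := by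
    ext i j
    exact hs _
  have hscalar : ((1 + ϖ * x) • 1 : Matrix (Fin 2) (Fin 2) R).map π = 1 := by
    have hϖ0 : π ϖ = 0 := hπ hϖ
    ext i j
    simp [one_apply, apply_ite π, hϖ0]
  rw [hd.2, Matrix.map_mul, Matrix.map_mul, hγ, hg₂, hscalar, mul_one, mul_one]

lemma trace_sub_one_sub_mem {π : R →+* k} (h2 : (2 : R) ∈ maximalIdeal R)
    (hπ : maximalIdeal R ≤ RingHom.ker π) (hs : ∀ c, π (s c) = c) (hϖ : ϖ ∈ maximalIdeal R)
    (hd : IsDecomp R k s ϖ h γ g₂ x) (hd' : IsDecomp R k s ϖ h γ' g₂' x') :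
    trace ((g₂' : Matrix (Fin 2) (Fin 2) R) - 1) - trace ((g₂ : Matrix (Fin 2) (Fin 2) R) - 1)
      ∈ maximalIdeal R ^ 3 := by
  obtain rfl : γ' = γ := Units.ext ((hd'.map_eq hπ hs hϖ).symm.trans (hd.map_eq hπ hs hϖ))
  have hscal : (1 + ϖ * x') • (g₂' : Matrix (Fin 2) (Fin 2) R) = (1 + ϖ * x) • g₂ := by
    have hcancel := hd'.2.symm.trans hd.2
    rw [mul_assoc, mul_assoc, mul_smul_one, mul_smul_one] at hcancel
    exact (Units.mul_right_inj (map s γ')).mp hcancel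
  obtain ⟨u, hu⟩ := isUnit_one_add_of_mem_maximalIdeal (Ideal.mul_mem_right x' _ hϖ)
  refine trace_sub_one_sub_mem_of_smul_eq (by simpa using h2) hd.mem_congruenceSubgroup
    hd'.mem_congruenceSubgroup (c := ↑u⁻¹ * (1 + ϖ * x)) ?_
  rw [mul_smul, ← hscal, ← hu, smul_smul, Units.inv_mul, one_smul]

lemma mul (hd : IsDecomp R k s ϖ h γ g₂ x) (hd' : IsDecomp R k s ϖ h' γ' g₂' x') :
    IsDecomp R k s ϖ (h * h') (γ * γ') ((map s γ')⁻¹ * g₂ * map s γ' * g₂')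
      (x + x' + ϖ * (x * x')) := by
  refine ⟨mem_congruenceSubgroup_iff.mp (mul_mem ?_ hd'.mem_congruenceSubgroup), ?_⟩
  · simpa only [inv_inv] using
      Subgroup.Normal.conj_mem inferInstance g₂ hd.mem_congruenceSubgroup (map s γ')⁻¹
  have hGL : map s γ * g₂ * (map s γ' * g₂')
      = map s (γ * γ') * ((map s γ')⁻¹ * g₂ * map s γ' * g₂') := by
    rw [map_mul]; group
  have hc : (1 + ϖ * x) * (1 + ϖ * x') = 1 + ϖ * (x + x' + ϖ * (x * x')) := by ring
  rw [Units.val_mul, hd.2, hd'.2]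
  simp only [Matrix.mul_smul, Matrix.smul_mul, mul_one, smul_smul]
  rw [mul_comm, hc]
  exact congrArg (_ • ·) (congrArg Units.val hGL)

end IsDecomp

open Classical in
noncomputable def decompTrace (R : Type*) [CommRing R] [IsDomain R] [IsDiscreteValuationRing R]
    (k : Type*) [Field k] (s : k →+* R) (ϖ : R) (h : GL (Fin 2) R) : R ⧸ maximalIdeal R ^ 3 :=
  if hd : ∃ d : GL (Fin 2) k × GL (Fin 2) R × R, IsDecomp R k s ϖ h d.1 d.2.1 d.2.2 then
    Ideal.Quotient.mk _ (trace ((hd.choose.2.1 : Matrix (Fin 2) (Fin 2) R) - 1))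
  else 0

lemma decompTrace_eq {R : Type*} [CommRing R] [IsDomain R] [IsDiscreteValuationRing R]
    {k : Type*} [Field k] {s : k →+* R} {ϖ : R} {π : R →+* k}
    (h2 : (2 : R) ∈ maximalIdeal R) (hπ : maximalIdeal R ≤ RingHom.ker π)
    (hs : ∀ c, π (s c) = c) (hϖ : ϖ ∈ maximalIdeal R) {h : GL (Fin 2) R} {γ : GL (Fin 2) k}
    {g₂ : GL (Fin 2) R} {x : R} (hd : IsDecomp R k s ϖ h γ g₂ x) :
    decompTrace R k s ϖ h = Ideal.Quotient.mk _ (trace ((g₂ : Matrix (Fin 2) (Fin 2) R) - 1)) := by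
  have hex : ∃ d : GL (Fin 2) k × GL (Fin 2) R × R, IsDecomp R k s ϖ h d.1 d.2.1 d.2.2 :=
    ⟨(γ, g₂, x), hd⟩
  rw [decompTrace, dif_pos hex, Ideal.Quotient.eq]
  exact hd.trace_sub_one_sub_mem h2 hπ hs hϖ hex.choose_spec

theorem stmt10_general (R : Type*) [CommRing R] [IsDomain R] [IsDiscreteValuationRing R]
    (k : Type*) [Field k] (hchar : CharP k 2)
    (π : R →+* k)
    (hπker : RingHom.ker π = IsLocalRing.maximalIdeal R)
    (s : k →+* R) (hs : ∀ c : k, π (s c) = c)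
    (ϖ : R) (hϖ : Irreducible ϖ)
    (H : Subgroup (GL (Fin 2) R))
    (hH : ∀ h ∈ H, ∃ (γ : GL (Fin 2) k) (g₂ : GL (Fin 2) R) (x : R),
      IsDecomp R k s ϖ h γ g₂ x) :
    ∃ f : GL (Fin 2) R → R ⧸ (IsLocalRing.maximalIdeal R ^ 3),
      (∀ h ∈ H, ∀ (γ : GL (Fin 2) k) (g₂ : GL (Fin 2) R) (x : R),
        IsDecomp R k s ϖ h γ g₂ x →
        f h = Ideal.Quotient.mk (IsLocalRing.maximalIdeal R ^ 3)
          (Matrix.trace ((g₂ : Matrix (Fin 2) (Fin 2) R) - 1))) ∧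
      (∀ h ∈ H, ∃ y ∈ IsLocalRing.maximalIdeal R ^ 2,
        f h = Ideal.Quotient.mk (IsLocalRing.maximalIdeal R ^ 3) y) ∧
      (∀ h ∈ H, ∀ h' ∈ H, f (h * h') = f h + f h') := by
  have h2 : (2 : R) ∈ maximalIdeal R := by
    rw [← hπker, RingHom.mem_ker, map_ofNat]
    exact @CharP.ofNat_eq_zero k _ 2 hchar _
  have hϖ' : ϖ ∈ maximalIdeal R := (mem_maximalIdeal ϖ).mpr hϖ.not_isUnit
  have hf := fun {h γ g₂ x} (hd : IsDecomp R k s ϖ h γ g₂ x) =>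
    decompTrace_eq h2 hπker.ge hs hϖ' hd
  refine ⟨decompTrace R k s ϖ, fun h _ γ g₂ x hd => hf hd, fun h hh => ?_,
    fun h hh h' hh' => ?_⟩
  · obtain ⟨γ, g₂, x, hd⟩ := hH h hh
    exact ⟨_, GeneralLinearGroup.trace_sub_one_mem hd.mem_congruenceSubgroup, hf hd⟩
  · obtain ⟨γ, g₂, x, hd⟩ := hH h hh
    obtain ⟨γ', g₂', x', hd'⟩ := hH h' hh'
    rw [hf (hd.mul hd'), hf hd, hf hd', ← map_add, Ideal.Quotient.eq]
    refine Ideal.pow_le_pow_right (by norm_num : 3 ≤ 2 + 2) ?_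
    rw [pow_add]
    exact GeneralLinearGroup.trace_conj_mul_sub_one_sub_mem hd.mem_congruenceSubgroup
      hd'.mem_congruenceSubgroup _

/-- Lemma 3.12 of the paper: for a complete discrete valuation ring `R` of residue
characteristic `2` with finite residue field `k`, a Teichmüller splitting `s : k → R`,
and a subgroup `H ⊆ GL₂(k)·G^{2−}` of `GL₂(R)`, the map `h = γ·g₂·(1+ϖx) ↦
Tr(g₂ − Id) mod 𝔭³` is a well-defined homomorphism `H → 𝔭²/𝔭³`. -/
theorem stmt10 (R : Type*) [CommRing R] [IsDomain R] [IsDiscreteValuationRing R]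
    [IsAdicComplete (IsLocalRing.maximalIdeal R) R]
    (k : Type*) [Field k] [Fintype k] (hchar : CharP k 2)
    (π : R →+* k) (hπ : Function.Surjective π)
    (hπker : RingHom.ker π = IsLocalRing.maximalIdeal R)
    (s : k →+* R) (hs : ∀ c : k, π (s c) = c)
    (ϖ : R) (hϖ : Irreducible ϖ)
    (H : Subgroup (GL (Fin 2) R))
    (hH : ∀ h ∈ H, ∃ (γ : GL (Fin 2) k) (g₂ : GL (Fin 2) R) (x : R),
      IsDecomp R k s ϖ h γ g₂ x) :
    ∃ f : GL (Fin 2) R → R ⧸ (IsLocalRing.maximalIdeal R ^ 3),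
      (∀ h ∈ H, ∀ (γ : GL (Fin 2) k) (g₂ : GL (Fin 2) R) (x : R),
        IsDecomp R k s ϖ h γ g₂ x →
        f h = Ideal.Quotient.mk (IsLocalRing.maximalIdeal R ^ 3)
          (Matrix.trace ((g₂ : Matrix (Fin 2) (Fin 2) R) - 1))) ∧
      (∀ h ∈ H, ∃ y ∈ IsLocalRing.maximalIdeal R ^ 2,
        f h = Ideal.Quotient.mk (IsLocalRing.maximalIdeal R ^ 3) y) ∧
      (∀ h ∈ H, ∀ h' ∈ H, f (h * h') = f h + f h') :=
  stmt10_general R k hchar π hπker s hs ϖ hϖ H hH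
end
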